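/- arXiv:1303.7009 — 3 statements merged into one kernel-verified Lean document; each statement's English description precedes it below -/
import Mathlib

section
/- Let (α, 𝓐, μ) be a measure space, let f, g : α → ℝ be integrable with f ≥ 0 and g ≥ 0, and let c ≥ 0. Define A = {x ∈ α | f(x) ≥ c·g(x)}. Then for every measurable set B ⊆ α with ∫_B g dμ ≤ ∫_A g dμ, it holds that ∫_B f dμ ≤ ∫_A f dμ. -/
open MeasureTheory

/-- Let `(α, 𝓐, μ)` be a measure space, `f, g : α → ℝ` integrable with `f ≥ 0`, `g ≥ 0`, and
`c ≥ 0`.  With the likelihood-ratio acceptance region `A = {x | f(x) ≥ c·g(x)}`, every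
measurable set `B` with `∫_B g dμ ≤ ∫_A g dμ` satisfies `∫_B f dμ ≤ ∫_A f dμ`: among all
selections admitting no more background than the likelihood-ratio region `A`, the region `A`
admits the most signal. -/
theorem likelihoodRatio_cut_maximizes_signal_given_background
    {α : Type*} [MeasurableSpace α] (μ : Measure α) (f g : α → ℝ)
    (hf : Integrable f μ) (hg : Integrable g μ)
    (hf0 : ∀ x, 0 ≤ f x) (hg0 : ∀ x, 0 ≤ g x)
    (c : ℝ) (hc : 0 ≤ c) (B : Set α) (hB : MeasurableSet B)
    (hbg : (∫ x in B, g x ∂μ) ≤ ∫ x in {x | f x ≥ c * g x}, g x ∂μ) :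
    (∫ x in B, f x ∂μ) ≤ ∫ x in {x | f x ≥ c * g x}, f x ∂μ := by
  set h : α → ℝ := fun x => f x - c * g x with hh_def
  have hgc : Integrable (fun x => c * g x) μ := hg.const_mul c
  have hint : Integrable h μ := hf.sub hgc
  -- measurable modification of h
  obtain ⟨h', h'sm, hhh'⟩ :
      ∃ h' : α → ℝ, StronglyMeasurable h' ∧ h =ᵐ[μ] h' := by
    exact ⟨hint.aestronglyMeasurable.mk h, hint.aestronglyMeasurable.stronglyMeasurable_mk,
      hint.aestronglyMeasurable.ae_eq_mk⟩
  set A : Set α := {x | f x ≥ c * g x} with hA_def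
  set A' : Set α := {x | 0 ≤ h' x} with hA'_def
  have hA'meas : MeasurableSet A' :=
    measurableSet_le measurable_const h'sm.measurable
  have hAA' : A =ᵐ[μ] A' := by
    filter_upwards [hhh'] with x hx
    show (x ∈ A) = (x ∈ A')
    have : (x ∈ A) ↔ (x ∈ A') := by
      constructor
      · intro hxA
        have h1 : 0 ≤ h x := sub_nonneg.mpr hxA
        rw [hx] at h1
        exact h1
      · intro hxA'
        have h1 : 0 ≤ h x := by rw [hx]; exact hxA'
        exact sub_nonneg.mp h1
    exact propext this
  have hrestr : μ.restrict A = μ.restrict A' := Measure.restrict_congr_set hAA'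
  -- key pointwise a.e. inequality on indicators of h
  have hkey : (∫ x in B, h x ∂μ) ≤ ∫ x in A', h x ∂μ := by
    rw [← integral_indicator hB, ← integral_indicator hA'meas]
    refine integral_mono_ae (hint.indicator hB) (hint.indicator hA'meas) ?_
    filter_upwards [hhh'] with x hx
    by_cases hxA : x ∈ A'
    · have hx0 : 0 ≤ h x := by rw [hx]; exact hxA
      by_cases hxB : x ∈ B <;>
        simp [Set.indicator_of_mem, Set.indicator_of_notMem, hxA, hxB, hx0, le_refl]
    · have hx0 : h x < 0 := by
        rw [hx]; exact lt_of_not_ge hxA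
      by_cases hxB : x ∈ B <;>
        simp [Set.indicator_of_mem, Set.indicator_of_notMem, hxA, hxB, le_of_lt hx0]
  have hsplit : ∀ s : Set α, (∫ x in s, h x ∂μ)
      = (∫ x in s, f x ∂μ) - c * ∫ x in s, g x ∂μ := by
    intro s
    rw [hh_def]
    rw [integral_sub hf.integrableOn hgc.integrableOn, integral_const_mul]
  have hA'A : ∀ (F : α → ℝ), (∫ x in A', F x ∂μ) = ∫ x in A, F x ∂μ := by
    intro F; rw [hrestr]
  rw [hsplit B, hA'A h, hsplit A] at hkey
  have : c * (∫ x in B, g x ∂μ) ≤ c * ∫ x in A, g x ∂μ :=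
    mul_le_mul_of_nonneg_left hbg hc
  linarith
end

section
/- Consider the two-resolution Gaussian delta-function model with background scale M_b = 80 and signal scale M_s = 90, in which each event's resolution equals σ₁ or σ₂ (each with probability 1/2, independent of whether the event is signal or background). For a scale M and cut c, the X_M-cut selects events with (m − M)/σ > c, giving signal efficiency s(M, c) = (1/2)·Q((M + cσ₁ − M_s)/σ₁) + (1/2)·Q((M + cσ₂ − M_s)/σ₂) and background efficiency b(M, c) = (1/2)·Q((M + cσ₁ − M_b)/σ₁) + (1/2)·Q((M + cσ₂ − M_b)/σ₂), where Q(z) = ∫_z^∞ Gauss(x, 0, 1) dx. Then there exist σ₁, σ₂ > 0, a scale M < M_b (i.e. below the zero-resolution background maximum m̃ = 80), and cut values c₁, c₂ ∈ ℝ such that the two selections have equal signal efficiency, s(M, c₁) = s(M_b, c₂), but the selection with M < m̃ has strictly smaller background: b(M, c₁) < b(M_b, c₂). Hence the optimal value of M may be less than the zero-resolution maximum m̃. -/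
open MeasureTheory Real

/-!
At the endpoint scale `M = 80` every cut `X_80 > c` keeps the background fraction `Q(c)` in both
resolution classes. Take `σ₁ = 1`, `σ₂ = 100`: in the wide class the signal lies only `0.1 σ₂`
above the background, so near `c = 8` the endpoint cut keeps background `Q(8)` there for the
negligible signal `Q(7.9)`. The scale `M = 78` with `c₁ = 10` keeps the narrow-class cut `m > 88`
but moves the wide-class cut to `m > 1078`, which roughly halves the background. To match its
signal efficiency the endpoint cut needs to shed only `Q(7.9)/2 ≤ φ(7.9)/15.8`, and since
raising `c` by `0.01` sheds at least `0.005 φ(2)` of narrow-class signal, the intermediate value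
theorem gives a matching `c₂ ∈ [8, 8.01]`; its background is still at least
`Q(8) - 0.01 φ(8)`, which beats `(Q(8) + Q(9.98))/2` because `Q(8) ≥ 0.05 φ(8.05)`.
-/

/-- The Gaussian probability density with mean `μ` and width `σ`. -/
noncomputable def gauss (x μ σ : ℝ) : ℝ :=
  (1 / (σ * Real.sqrt (2 * Real.pi))) * Real.exp (-(x - μ) ^ 2 / (2 * σ ^ 2))

/-- The standard Gaussian upper tail `Q(z) = ∫_z^∞ Gauss(x, 0, 1) dx`. -/
noncomputable def Qtail (z : ℝ) : ℝ := ∫ x in Set.Ioi z, gauss x 0 1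

/-- Signal efficiency of the `X_M > c` cut in the two-resolution Gaussian delta-function
model with signal scale `M_s = 90`. -/
noncomputable def sigEff (σ₁ σ₂ M c : ℝ) : ℝ :=
  (1 / 2) * Qtail ((M + c * σ₁ - 90) / σ₁) + (1 / 2) * Qtail ((M + c * σ₂ - 90) / σ₂)

/-- Background efficiency of the `X_M > c` cut in the two-resolution Gaussian delta-function
model with background scale `M_b = 80`. -/
noncomputable def bkgEff (σ₁ σ₂ M c : ℝ) : ℝ :=
  (1 / 2) * Qtail ((M + c * σ₁ - 80) / σ₁) + (1 / 2) * Qtail ((M + c * σ₂ - 80) / σ₂)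

lemma gauss_zero_one (x : ℝ) : gauss x 0 1 = exp (-x ^ 2 / 2) / √(2 * π) := by
  simp only [gauss, sub_zero, one_pow, mul_one, one_mul]
  ring

lemma gauss_zero_one_pos (x : ℝ) : 0 < gauss x 0 1 := by
  rw [gauss_zero_one]
  positivity

lemma integrable_gauss_zero_one : Integrable fun x ↦ gauss x 0 1 := by
  refine ((integrable_exp_neg_mul_sq (b := 1 / 2) (by norm_num)).div_const (√(2 * π))).congr
    (.of_forall fun x ↦ ?_)
  dsimp only
  rw [gauss_zero_one]
  congr 2
  ring

lemma gauss_zero_one_le_of_abs_le {x y : ℝ} (h : |x| ≤ |y|) : gauss y 0 1 ≤ gauss x 0 1 := by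
  rw [gauss_zero_one, gauss_zero_one]
  gcongr exp ?_ / _
  linarith [sq_le_sq.2 h]

lemma one_add_mul_gauss_le (x y : ℝ) : (1 + (y ^ 2 - x ^ 2) / 2) * gauss y 0 1 ≤ gauss x 0 1 := by
  have hratio : gauss y 0 1 = gauss x 0 1 * exp (-((y ^ 2 - x ^ 2) / 2)) := by
    rw [gauss_zero_one, gauss_zero_one, div_mul_eq_mul_div, ← exp_add]
    ring_nf
  have htangent : (1 + (y ^ 2 - x ^ 2) / 2) * exp (-((y ^ 2 - x ^ 2) / 2)) ≤ 1 := by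
    rw [← le_div_iff₀ (exp_pos _), exp_neg, div_inv_eq_mul, one_mul, add_comm]
    exact add_one_le_exp _
  calc (1 + (y ^ 2 - x ^ 2) / 2) * gauss y 0 1
      = (1 + (y ^ 2 - x ^ 2) / 2) * exp (-((y ^ 2 - x ^ 2) / 2)) * gauss x 0 1 := by
        rw [hratio]; ring
    _ ≤ gauss x 0 1 := mul_le_of_le_one_left (gauss_zero_one_pos x).le htangent

lemma Qtail_sub_Qtail (a b : ℝ) : Qtail a - Qtail b = ∫ x in a..b, gauss x 0 1 :=
  intervalIntegral.integral_Ioi_sub_Ioi' integrable_gauss_zero_one.integrableOn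
    integrable_gauss_zero_one.integrableOn

lemma Qtail_nonneg (z : ℝ) : 0 ≤ Qtail z :=
  setIntegral_nonneg measurableSet_Ioi fun x _ ↦ (gauss_zero_one_pos x).le

lemma Qtail_antitone : Antitone Qtail := fun a b hab ↦ by
  rw [← sub_nonneg, Qtail_sub_Qtail]
  exact intervalIntegral.integral_nonneg hab fun x _ ↦ (gauss_zero_one_pos x).le

@[fun_prop]
lemma continuous_Qtail : Continuous Qtail := by
  have h : Qtail = fun z ↦ Qtail 0 - ∫ x in (0 : ℝ)..z, gauss x 0 1 := by
    funext z
    rw [← Qtail_sub_Qtail, sub_sub_cancel]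
  rw [h]
  exact continuous_const.sub (integrable_gauss_zero_one.continuous_primitive 0)

lemma Qtail_sub_le_mul_gauss {a b : ℝ} (ha : 0 ≤ a) (hab : a ≤ b) :
    Qtail a - Qtail b ≤ (b - a) * gauss a 0 1 := by
  rw [Qtail_sub_Qtail, ← smul_eq_mul, ← intervalIntegral.integral_const]
  refine intervalIntegral.integral_mono_on hab (integrable_gauss_zero_one.intervalIntegrable)
    intervalIntegrable_const fun x hx ↦ gauss_zero_one_le_of_abs_le ?_
  rw [abs_of_nonneg ha, abs_of_nonneg (ha.trans hx.1)]
  exact hx.1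

lemma mul_gauss_le_Qtail_sub {a b c : ℝ} (hab : a ≤ b) (ha : |a| ≤ |c|) (hb : |b| ≤ |c|) :
    (b - a) * gauss c 0 1 ≤ Qtail a - Qtail b := by
  rw [Qtail_sub_Qtail, ← smul_eq_mul, ← intervalIntegral.integral_const]
  exact intervalIntegral.integral_mono_on hab intervalIntegrable_const
    integrable_gauss_zero_one.intervalIntegrable fun x hx ↦
      gauss_zero_one_le_of_abs_le ((abs_le_max_abs_abs hx.1 hx.2).trans (max_le ha hb))

lemma Qtail_le_gauss_div {z : ℝ} (hz : 0 < z) : Qtail z ≤ gauss z 0 1 / z := by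
  -- `x ^ 2 / 2 ≥ z * x - z ^ 2 / 2` dominates the density by an exponential agreeing with it at `z`
  have hdom : ∀ x, gauss x 0 1 ≤ gauss z 0 1 * exp (z ^ 2) * exp (-z * x) := fun x ↦ by
    rw [gauss_zero_one, gauss_zero_one, div_mul_eq_mul_div, div_mul_eq_mul_div, ← exp_add,
      ← exp_add]
    gcongr
    nlinarith [sq_nonneg (x - z)]
  calc Qtail z ≤ ∫ x in Set.Ioi z, gauss z 0 1 * exp (z ^ 2) * exp (-z * x) :=
        setIntegral_mono_on integrable_gauss_zero_one.integrableOn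
          ((exp_neg_integrableOn_Ioi z hz).const_mul _) measurableSet_Ioi fun x _ ↦ hdom x
    _ = gauss z 0 1 * (exp (z ^ 2) * exp (-z * z)) / z := by
        rw [integral_const_mul, integral_exp_mul_Ioi (neg_lt_zero.2 hz), neg_div_neg_eq]
        ring
    _ = gauss z 0 1 / z := by rw [← exp_add, show z ^ 2 + -z * z = 0 by ring, exp_zero, mul_one]

lemma continuous_sigEff (σ₁ σ₂ M : ℝ) : Continuous (sigEff σ₁ σ₂ M) := by
  unfold sigEff
  fun_prop

lemma bkgEff_eighty {σ₁ σ₂ : ℝ} (h₁ : σ₁ ≠ 0) (h₂ : σ₂ ≠ 0) (c : ℝ) :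
    bkgEff σ₁ σ₂ 80 c = Qtail c := by
  simp only [bkgEff, add_sub_cancel_left, mul_div_cancel_right₀ c h₁, mul_div_cancel_right₀ c h₂]
  ring

lemma sigEff_mem_Icc :
    sigEff 1 100 78 10 ∈ Set.Icc (sigEff 1 100 80 8.01) (sigEff 1 100 80 8) := by
  have hwide_tail : Qtail 7.91 ≤ gauss 7.9 0 1 / 7.9 :=
    (Qtail_antitone (by norm_num)).trans (Qtail_le_gauss_div (by norm_num))
  have hnarrow_step : (-1.99 - -2) * gauss (-2) 0 1 ≤ Qtail (-2) - Qtail (-1.99) :=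
    mul_gauss_le_Qtail_sub (by norm_num) le_rfl (by norm_num [abs_of_neg])
  have hdensity := one_add_mul_gauss_le (-2) 7.9
  have hwide : Qtail 9.88 ≤ Qtail 7.9 := Qtail_antitone (by norm_num)
  norm_num only [sigEff, Set.mem_Icc] at hwide_tail hnarrow_step hdensity hwide ⊢
  constructor <;> linarith [gauss_zero_one_pos (-2), Qtail_nonneg 9.88]

lemma bkgEff_lt_Qtail : bkgEff 1 100 78 10 < Qtail 8.01 := by
  have hshift : Qtail 8 - Qtail 8.01 ≤ (8.01 - 8) * gauss 8 0 1 :=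
    Qtail_sub_le_mul_gauss (by norm_num) (by norm_num)
  have hnarrow : (8.05 - 8) * gauss 8.05 0 1 ≤ Qtail 8 - Qtail 8.05 :=
    mul_gauss_le_Qtail_sub (by norm_num) (by norm_num) le_rfl
  have hwide : Qtail 9.98 ≤ gauss 9.98 0 1 / 9.98 := Qtail_le_gauss_div (by norm_num)
  have hdensity_wide := one_add_mul_gauss_le 8 9.98
  have hdensity_narrow := one_add_mul_gauss_le 8.05 8
  norm_num only [bkgEff] at hshift hnarrow hwide hdensity_wide hdensity_narrow ⊢
  linarith [gauss_zero_one_pos 8, Qtail_nonneg 8.05]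

/-- In the two-resolution Gaussian delta-function model with `M_b = 80` and `M_s = 90`, there
exist resolutions `σ₁, σ₂ > 0`, a scale `M < 80` (below the zero-resolution background
maximum `m̃ = 80`), and cut values `c₁, c₂` such that the two selections have equal signal
efficiency, `s(M, c₁) = s(80, c₂)`, but the selection with `M < m̃` has strictly smaller
background: `b(M, c₁) < b(80, c₂)`.  Hence the optimal value of `M` may be less than the
zero-resolution maximum `m̃`. -/
theorem optimal_scale_may_be_below_endpoint :
    ∃ (σ₁ σ₂ M c₁ c₂ : ℝ), 0 < σ₁ ∧ 0 < σ₂ ∧ M < 80 ∧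
      sigEff σ₁ σ₂ M c₁ = sigEff σ₁ σ₂ 80 c₂ ∧
      bkgEff σ₁ σ₂ M c₁ < bkgEff σ₁ σ₂ 80 c₂ := by
  obtain ⟨c₂, hc₂, hsig⟩ := intermediate_value_Icc' (by norm_num : (8 : ℝ) ≤ 8.01)
    (continuous_sigEff 1 100 80).continuousOn sigEff_mem_Icc
  refine ⟨1, 100, 78, 10, c₂, one_pos, by norm_num, by norm_num, hsig.symm, ?_⟩
  calc bkgEff 1 100 78 10 < Qtail 8.01 := bkgEff_lt_Qtail
    _ ≤ Qtail c₂ := Qtail_antitone hc₂.2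
    _ = bkgEff 1 100 80 c₂ := (bkgEff_eighty one_ne_zero (by norm_num) c₂).symm
end

section
/- There exist a two-point prior (true values t₁ < t₂ with weights q and 1 − q, q ∈ (0, 1)), a Gaussian measurement model, a scale M with t₁ < M < t₂, and two events with observed values and resolutions (μ₁, σ₁) and (μ₂, σ₂), σ₁, σ₂ > 0, such that the remeasurement probabilities satisfy P_M^{(1)} < P_M^{(2)} while the posterior truth probabilities satisfy Q_M^{(1)} > Q_M^{(2)}, where P_M^{(i)} = ∫_M^∞ Gauss(x, μ_i, σ_i) dx and Q_M^{(i)} = (1 − q)·Gauss(μ_i, t₂, σ_i) / ( q·Gauss(μ_i, t₁, σ_i) + (1 − q)·Gauss(μ_i, t₂, σ_i) ). Hence an ordering of events by P_M does not determine the ordering by Q_M: the variables P_M and Q_M do not contain the same information. -/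
/-!
The remeasurement probability `P_M` of an event depends on it only through the standardized
threshold `(M - μ) / σ`, and decreases strictly in it. For a two-point prior the posterior `Q_M`
depends on the event only through the log-likelihood ratio
`((μ - t₂)² - (μ - t₁)²) / (2σ²)` of `t₁` against `t₂`, and decreases strictly in it. The two
statistics can be ordered oppositely: for `t₁ = 0`, `t₂ = 2`, `q = 1/2`, `M = 1`, the events
`(μ, σ) = (2, 1)` and `(3, 3/2)` have thresholds `-1 > -4/3` but log-likelihood ratios
`-2 < -16/9`.
-/

open MeasureTheory Real Set

lemma gauss_pos {σ : ℝ} (hσ : 0 < σ) (x μ : ℝ) : 0 < gauss x μ σ := by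
  unfold gauss; positivity

lemma gauss_eq_inv_mul_gauss_std (x μ σ : ℝ) :
    gauss x μ σ = σ⁻¹ * gauss ((x - μ) / σ) 0 1 := by
  rcases eq_or_ne σ 0 with rfl | hσ
  · simp [gauss]
  · unfold gauss
    field_simp
    ring_nf

lemma integrable_gauss_std : Integrable fun x => gauss x 0 1 := by
  simpa [gauss, neg_div, div_eq_inv_mul] using
    (integrable_exp_neg_mul_sq (b := 1 / 2) (by norm_num)).const_mul (1 / √(2 * π))

lemma setIntegral_Ioi_gauss {σ : ℝ} (hσ : 0 < σ) (M μ : ℝ) :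
    ∫ x in Ioi M, gauss x μ σ = ∫ y in Ioi ((M - μ) / σ), gauss y 0 1 := by
  have htranslate : ∫ x in Ioi M, gauss ((x - μ) * σ⁻¹) 0 1
      = ∫ y in Ioi (M - μ), gauss (y * σ⁻¹) 0 1 := by
    rw [← sub_add_cancel M μ, ← preimage_sub_const_Ioi, add_sub_cancel_right]
    exact (measurePreserving_sub_right volume μ).setIntegral_preimage_emb
      (measurableEmbedding_subRight μ) (fun y => gauss (y * σ⁻¹) 0 1) _
  simp_rw [gauss_eq_inv_mul_gauss_std _ μ σ, div_eq_mul_inv]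
  rw [integral_const_mul, htranslate,
    integral_comp_mul_right_Ioi (fun y => gauss y 0 1) _ (inv_pos.2 hσ), smul_eq_mul, inv_inv,
    inv_mul_cancel_left₀ hσ.ne']

lemma setIntegral_Ioi_lt_setIntegral_Ioi {f : ℝ → ℝ} {a b : ℝ} (hf : IntegrableOn f (Ioi a))
    (hpos : ∀ x ∈ Ioo a b, 0 < f x) (hab : a < b) :
    ∫ x in Ioi b, f x < ∫ x in Ioi a, f x := by
  have hsplit := intervalIntegral.integral_Ioi_sub_Ioi hf hab.le
  have hmiddle : 0 < ∫ x in a..b, f x :=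
    intervalIntegral.intervalIntegral_pos_of_pos_on
      ((intervalIntegrable_iff_integrableOn_Ioc_of_le hab.le).2 (hf.mono_set Ioc_subset_Ioi_self))
      hpos hab
  linarith

lemma strictAnti_setIntegral_Ioi_gauss_std : StrictAnti fun a => ∫ x in Ioi a, gauss x 0 1 :=
  fun _ _ hab => setIntegral_Ioi_lt_setIntegral_Ioi integrable_gauss_std.integrableOn
    (fun x _ => gauss_pos one_pos x 0) hab

noncomputable def logLikelihoodRatio (t₁ t₂ σ μ : ℝ) : ℝ :=
  ((μ - t₂) ^ 2 - (μ - t₁) ^ 2) / (2 * σ ^ 2)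

lemma gauss_div_gauss {σ : ℝ} (hσ : σ ≠ 0) (μ t₁ t₂ : ℝ) :
    gauss μ t₁ σ / gauss μ t₂ σ = exp (logLikelihoodRatio t₁ t₂ σ μ) := by
  have hc : 1 / (σ * √(2 * π)) ≠ 0 := by positivity
  rw [gauss, gauss, mul_div_mul_left _ _ hc, ← exp_sub, logLikelihoodRatio]
  ring_nf

noncomputable def twoPointPosterior (q t₁ t₂ σ μ : ℝ) : ℝ :=
  (1 - q) * gauss μ t₂ σ / (q * gauss μ t₁ σ + (1 - q) * gauss μ t₂ σ)

lemma twoPointPosterior_eq {σ : ℝ} (hσ : 0 < σ) (q t₁ t₂ μ : ℝ) :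
    twoPointPosterior q t₁ t₂ σ μ
      = (1 - q) / (q * exp (logLikelihoodRatio t₁ t₂ σ μ) + (1 - q)) := by
  have h₂ := gauss_pos hσ μ t₂
  rw [twoPointPosterior, ← gauss_div_gauss hσ.ne']
  field_simp

lemma twoPointPosterior_lt {q t₁ t₂ σ₁ σ₂ μ₁ μ₂ : ℝ} (hq₀ : 0 < q) (hq₁ : q < 1)
    (hσ₁ : 0 < σ₁) (hσ₂ : 0 < σ₂)
    (h : logLikelihoodRatio t₁ t₂ σ₁ μ₁ < logLikelihoodRatio t₁ t₂ σ₂ μ₂) :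
    twoPointPosterior q t₁ t₂ σ₂ μ₂ < twoPointPosterior q t₁ t₂ σ₁ μ₁ := by
  rw [twoPointPosterior_eq hσ₁, twoPointPosterior_eq hσ₂]
  have := exp_pos (logLikelihoodRatio t₁ t₂ σ₁ μ₁)
  exact div_lt_div_of_pos_left (by linarith) (by positivity) (by gcongr)

/-- There exist a two-point prior (true values `t₁ < t₂` with weights `q` and `1 − q`,
`q ∈ (0, 1)`), a Gaussian measurement model, a scale `M` with `t₁ < M < t₂`, and two events
`(μ₁, σ₁)`, `(μ₂, σ₂)` with `σ₁, σ₂ > 0`, such that the remeasurement probabilities satisfy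
`P_M^{(1)} < P_M^{(2)}` while the posterior truth probabilities satisfy
`Q_M^{(1)} > Q_M^{(2)}`, where `P_M^{(i)} = ∫_M^∞ Gauss(x, μ_i, σ_i) dx` and
`Q_M^{(i)} = (1 − q)·Gauss(μ_i, t₂, σ_i) / (q·Gauss(μ_i, t₁, σ_i) + (1 − q)·Gauss(μ_i, t₂, σ_i))`.
Hence an ordering of events by `P_M` does not determine the ordering by `Q_M`. -/
theorem exists_P_and_Q_orderings_differ :
    ∃ (t₁ t₂ q M μ₁ μ₂ σ₁ σ₂ : ℝ), t₁ < t₂ ∧ 0 < q ∧ q < 1 ∧ t₁ < M ∧ M < t₂ ∧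
      0 < σ₁ ∧ 0 < σ₂ ∧
      (∫ x in Set.Ioi M, gauss x μ₁ σ₁) < (∫ x in Set.Ioi M, gauss x μ₂ σ₂) ∧
      (1 - q) * gauss μ₁ t₂ σ₁ / (q * gauss μ₁ t₁ σ₁ + (1 - q) * gauss μ₁ t₂ σ₁)
        > (1 - q) * gauss μ₂ t₂ σ₂ / (q * gauss μ₂ t₁ σ₂ + (1 - q) * gauss μ₂ t₂ σ₂) := by
  refine ⟨0, 2, 1 / 2, 1, 2, 3, 1, 3 / 2, by norm_num, by norm_num, by norm_num, by norm_num,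
    by norm_num, one_pos, by norm_num, ?_, ?_⟩
  · rw [setIntegral_Ioi_gauss one_pos 1 2,
      setIntegral_Ioi_gauss (by norm_num : (0 : ℝ) < 3 / 2) 1 3]
    apply strictAnti_setIntegral_Ioi_gauss_std
    norm_num
  · show twoPointPosterior (1 / 2) 0 2 (3 / 2) 3 < twoPointPosterior (1 / 2) 0 2 1 2
    exact twoPointPosterior_lt (by norm_num) (by norm_num) one_pos (by norm_num)
      (by norm_num [logLikelihoodRatio])
end
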